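/- arXiv:1811.09209 — 3 statements merged into one kernel-verified Lean document; each statement's English description precedes it below -/
import Mathlib

section
/- Let X be a set of vertices and let W be partitioned into t classes W₁, …, W_t of equal size |W|/t, grouped into r = t/(k+1) consecutive blocks K_j of k+1 classes each. Suppose every x ∈ X satisfies deg(x, W) ≥ (k/(k+1) + α)|W|, and let 0 < η ≤ α/2. Then for every x ∈ X, the number of blocks K_j such that deg(x, W_i) ≥ η|W|/t holds for all k+1 classes W_i in the block K_j is at least (α − η)r ≥ (α/2)r. -/
open Finset

theorem stmt_7 {V : Type*} [Fintype V] [DecidableEq V]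
    (G : SimpleGraph V) [DecidableRel G.Adj]
    (k r : ℕ) (a η : ℝ) (ha : 0 < a) (hη : 0 < η) (hηa : η ≤ a / 2)
    (X W : Finset V) (Wc : Fin r → Fin (k + 1) → Finset V) (w : ℕ) (hw0 : 0 < w)
    (hcardc : ∀ j i, (Wc j i).card = w)
    (hdisjoint : ∀ j i j' i', (j, i) ≠ (j', i') → Disjoint (Wc j i) (Wc j' i'))
    (hunion : ∀ x, x ∈ W ↔ ∃ j i, x ∈ Wc j i)
    (hdeg : ∀ x ∈ X, ((k : ℝ) / (k + 1) + a) * W.card ≤ ((W.filter (G.Adj x)).card : ℝ)) :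
    ∀ x ∈ X,
      (a - η) * r ≤ ((Finset.univ.filter fun j : Fin r =>
          ∀ i, (η : ℝ) * w ≤ (((Wc j i).filter (G.Adj x)).card : ℝ)).card : ℝ) ∧
      (a / 2) * r ≤ (a - η) * r := by
  intro x hx
  have hr0 : (0:ℝ) ≤ r := Nat.cast_nonneg r
  refine ⟨?_, by nlinarith [mul_nonneg (by linarith : (0:ℝ) ≤ a - η - a/2) hr0]⟩
  classical
  set S : Fin r → Fin (k+1) → ℕ := fun j i => ((Wc j i).filter (G.Adj x)).card with hS
  have hWeq : W = (univ : Finset (Fin r × Fin (k+1))).biUnion (fun p => Wc p.1 p.2) := by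
    ext y
    simp [hunion y, Finset.mem_biUnion]
  have hpdisj : ∀ p ∈ (univ : Finset (Fin r × Fin (k+1))), ∀ q ∈ univ, p ≠ q →
      Disjoint (Wc p.1 p.2) (Wc q.1 q.2) := by
    intro p _ q _ hpq
    exact hdisjoint p.1 p.2 q.1 q.2 (by simpa using hpq)
  have hWcard : W.card = r * ((k+1) * w) := by
    rw [hWeq, Finset.card_biUnion hpdisj]
    simp [hcardc, Finset.card_univ, mul_assoc]
  have hdegsum : (W.filter (G.Adj x)).card = ∑ j, ∑ i, S j i := by
    rw [hWeq, Finset.filter_biUnion, Finset.card_biUnion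
      (fun p hp q hq hpq => Finset.disjoint_filter_filter (hpdisj p hp q hq hpq))]
    exact Fintype.sum_prod_type' (f := fun j i => ((Wc j i).filter (G.Adj x)).card)
  set GS : Finset (Fin r) := Finset.univ.filter fun j : Fin r =>
      ∀ i, (η : ℝ) * w ≤ ((S j i : ℕ) : ℝ) with hGS
  have hSw : ∀ j i, ((S j i : ℕ) : ℝ) ≤ w := by
    intro j i
    exact_mod_cast (Finset.card_filter_le _ _).trans_eq (hcardc j i)
  have hS0 : ∀ j i, (0:ℝ) ≤ ((S j i : ℕ) : ℝ) := fun j i => Nat.cast_nonneg _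
  have hgood : ∀ j ∈ GS, ∑ i, ((S j i : ℕ) : ℝ) ≤ ((k:ℝ)+1) * w := by
    intro j _
    calc ∑ i, ((S j i :ℕ) : ℝ) ≤ ∑ _i : Fin (k+1), (w:ℝ) :=
          Finset.sum_le_sum fun i _ => hSw j i
      _ = ((k:ℝ)+1) * w := by
          rw [Finset.sum_const, Finset.card_univ, Fintype.card_fin, nsmul_eq_mul]
          push_cast; ring
  have hbad : ∀ j ∈ (univ : Finset (Fin r)) \ GS, ∑ i, ((S j i : ℕ) : ℝ) ≤ ((k:ℝ)+η) * w := by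
    intro j hj
    simp only [hGS, Finset.mem_sdiff, Finset.mem_filter, Finset.mem_univ, true_and,
      not_forall] at hj
    obtain ⟨i0, hi0⟩ := hj
    push_neg at hi0
    have h1 : ∑ i, ((S j i : ℕ) : ℝ) =
        ((S j i0 : ℕ) : ℝ) + ∑ i ∈ Finset.univ.erase i0, ((S j i : ℕ) : ℝ) :=
      (Finset.add_sum_erase _ _ (Finset.mem_univ i0)).symm
    have h2 : ∑ i ∈ Finset.univ.erase i0, ((S j i : ℕ) : ℝ) ≤ (k:ℝ) * w := by
      calc ∑ i ∈ Finset.univ.erase i0, ((S j i : ℕ) : ℝ)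
          ≤ ∑ _i ∈ Finset.univ.erase i0, (w:ℝ) :=
            Finset.sum_le_sum fun i _ => hSw j i
        _ = (k:ℝ) * w := by
            rw [Finset.sum_const, Finset.card_erase_of_mem (Finset.mem_univ i0),
              Finset.card_univ]
            simp [nsmul_eq_mul]
    rw [h1]; nlinarith [hi0.le]
  have hsplit : ∑ j, ∑ i, ((S j i : ℕ) : ℝ) ≤
      (GS.card : ℝ) * (((k:ℝ)+1) * w) + ((r:ℝ) - GS.card) * (((k:ℝ)+η) * w) := by
    have hsub : GS ⊆ univ := Finset.subset_univ _
    rw [← Finset.sum_sdiff hsub]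
    have hA : ∑ j ∈ (univ : Finset (Fin r)) \ GS, ∑ i, ((S j i : ℕ) : ℝ) ≤
        (((univ : Finset (Fin r)) \ GS).card : ℝ) * (((k:ℝ)+η) * w) := by
      calc ∑ j ∈ (univ : Finset (Fin r)) \ GS, ∑ i, ((S j i : ℕ) : ℝ)
          ≤ ∑ _j ∈ (univ : Finset (Fin r)) \ GS, ((k:ℝ)+η) * w :=
            Finset.sum_le_sum hbad
        _ = _ := by rw [Finset.sum_const, nsmul_eq_mul]
    have hB : ∑ j ∈ GS, ∑ i, ((S j i : ℕ) : ℝ) ≤ (GS.card : ℝ) * (((k:ℝ)+1) * w) := by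
      calc ∑ j ∈ GS, ∑ i, ((S j i : ℕ) : ℝ) ≤ ∑ _j ∈ GS, ((k:ℝ)+1) * w :=
            Finset.sum_le_sum hgood
        _ = _ := by rw [Finset.sum_const, nsmul_eq_mul]
    have hcards : (((univ : Finset (Fin r)) \ GS).card : ℝ) = (r:ℝ) - GS.card := by
      rw [Finset.card_sdiff_of_subset hsub, Finset.card_univ, Fintype.card_fin]
      have := (Finset.card_filter_le univ (fun j : Fin r =>
        ∀ i, (η : ℝ) * w ≤ ((S j i : ℕ) : ℝ))).trans_eq (Finset.card_univ)
      have hle : GS.card ≤ r := by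
        simpa [Finset.card_univ] using Finset.card_le_card hsub
      exact Nat.cast_sub hle
    rw [hcards] at hA
    linarith
  -- combine with degree hypothesis
  have hk1 : (0:ℝ) < (k:ℝ) + 1 := by positivity
  have hwR : (0:ℝ) < (w:ℝ) := by exact_mod_cast hw0
  have hdegx := hdeg x hx
  rw [hWcard] at hdegx
  have hds : ((W.filter (G.Adj x)).card : ℝ) = ∑ j, ∑ i, ((S j i : ℕ) : ℝ) := by
    rw [hdegsum]; push_cast; rfl
  rw [hds] at hdegx
  set g : ℝ := (GS.card : ℝ) with hg
  have hg0 : (0:ℝ) ≤ g := Nat.cast_nonneg _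
  have hgr : g ≤ (r:ℝ) := by
    have : GS.card ≤ r := by
      simpa [Finset.card_univ] using Finset.card_le_card (Finset.subset_univ GS)
    rw [hg]; exact_mod_cast this
  have hQ : ((k:ℝ) + a * ((k:ℝ)+1)) * ((r:ℝ) * w) ≤
      (g * ((k:ℝ)+1) + ((r:ℝ) - g) * ((k:ℝ)+η)) * w := by
    have hL : ((k : ℝ) / (k + 1) + a) * ((r * ((k+1) * w) : ℕ) : ℝ) =
        ((k:ℝ) + a * ((k:ℝ)+1)) * ((r:ℝ) * w) := by
      push_cast
      field_simp
    rw [hL] at hdegx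
    calc ((k:ℝ) + a * ((k:ℝ)+1)) * ((r:ℝ) * w) ≤ ∑ j, ∑ i, ((S j i : ℕ) : ℝ) := hdegx
      _ ≤ (GS.card : ℝ) * (((k:ℝ)+1) * w) + ((r:ℝ) - GS.card) * (((k:ℝ)+η) * w) := hsplit
      _ = (g * ((k:ℝ)+1) + ((r:ℝ) - g) * ((k:ℝ)+η)) * w := by rw [← hg]; ring
  have hQ' : ((k:ℝ) + a * ((k:ℝ)+1)) * (r:ℝ) ≤ g * ((k:ℝ)+1) + ((r:ℝ) - g) * ((k:ℝ)+η) := by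
    have := (mul_le_mul_iff_of_pos_right hwR).mp (by linarith [hQ] : (((k:ℝ) + a * ((k:ℝ)+1)) * (r:ℝ)) * w ≤ (g * ((k:ℝ)+1) + ((r:ℝ) - g) * ((k:ℝ)+η)) * w)
    exact this
  have hkk : (0:ℝ) ≤ (k:ℝ) := Nat.cast_nonneg _
  show (a - η) * r ≤ g
  rcases le_or_gt η 1 with h1 | h1
  · nlinarith [hQ', mul_nonneg hr0 hkk, mul_nonneg hr0 (mul_nonneg hη.le (by linarith : (0:ℝ) ≤ a - η)), mul_nonneg hg0 hη.le, mul_nonneg (mul_nonneg hr0 hkk) ha.le]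
  · nlinarith [hQ', mul_nonneg hg0 (by linarith : (0:ℝ) ≤ η - 1), mul_nonneg hr0 hkk, mul_nonneg (mul_nonneg hr0 hkk) ha.le, mul_nonneg hr0 (by linarith : (0:ℝ) ≤ a - η)]
end

section
/- Let X be a finite set partitioned as X = ⋃_{j∈[r]} φ^{-1}(j) by a function φ : X → [r], where each x ∈ X has at least (α/2)r admissible values in [r] and φ(x) is required to be admissible for x. Then there exists such a function φ additionally satisfying |φ^{-1}(j)| ≤ 2|X|/(αr) for all j ∈ [r]. -/
open Finset

private lemma aux_assign {V : Type*} [DecidableEq V] (r : ℕ) (a : ℝ)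
    (ha : 0 < a) (hr : 1 ≤ r) (A : V → Finset (Fin r)) :
    ∀ X : Finset V, (∀ x ∈ X, (a / 2) * r ≤ ((A x).card : ℝ)) →
    ∃ φ : V → Fin r, (∀ x ∈ X, φ x ∈ A x) ∧
      ∀ j, (X.filter fun x => φ x = j).card ≤ ⌈(2 * X.card : ℝ) / (a * r)⌉₊ := by
  have hr0 : (0:ℝ) < r := by exact_mod_cast hr
  have har : 0 < a * r := by positivity
  intro X
  induction X using Finset.induction_on with
  | empty =>
    intro _
    exact ⟨fun _ => ⟨0, hr⟩, by simp, by simp⟩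
  | @insert x s hx ih =>
    intro hA
    obtain ⟨φ, hφ1, hφ2⟩ := ih (fun y hy => hA y (mem_insert_of_mem hy))
    have hAx : (a / 2) * r ≤ ((A x).card : ℝ) := hA x (mem_insert_self x s)
    set B : ℕ := ⌈(2 * ((s.card : ℝ) + 1)) / (a * r)⌉₊ with hB
    -- there is an admissible j with small fibre
    have key : ∃ j ∈ A x, (s.filter fun y => φ y = j).card < B := by
      by_contra h
      push_neg at h
      have h1 : (A x).card * B ≤ s.card := by
        calc (A x).card * B = ∑ _j ∈ A x, B := by rw [sum_const, smul_eq_mul]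
          _ ≤ ∑ j ∈ A x, (s.filter fun y => φ y = j).card := sum_le_sum h
          _ ≤ ∑ j ∈ (univ : Finset (Fin r)), (s.filter fun y => φ y = j).card :=
              sum_le_sum_of_subset (subset_univ _)
          _ = s.card := (card_eq_sum_card_fiberwise (fun y _ => mem_univ (φ y))).symm
      have hBle : (2 * ((s.card : ℝ) + 1)) / (a * r) ≤ (B : ℝ) := Nat.le_ceil _
      have h2 : ((s.card : ℝ) + 1) ≤ ((A x).card : ℝ) * B := by
        have e : ((a/2) * r) * ((2 * ((s.card : ℝ) + 1)) / (a * r)) = (s.card : ℝ) + 1 := by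
          field_simp
        have hBnn : (0:ℝ) ≤ (B:ℝ) := by positivity
        nlinarith [mul_le_mul_of_nonneg_left hBle (le_of_lt (by positivity : (0:ℝ) < (a/2)*r)),
          mul_le_mul_of_nonneg_right hAx hBnn]
      have h1' : ((A x).card : ℝ) * B ≤ (s.card : ℝ) := by exact_mod_cast h1
      linarith
    obtain ⟨j, hj, hjlt⟩ := key
    refine ⟨Function.update φ x j, ?_, ?_⟩
    · intro y hy
      rcases mem_insert.mp hy with rfl | hy
      · simpa using hj
      · have hne : y ≠ x := fun h => hx (h ▸ hy)
        simpa [Function.update_of_ne hne] using hφ1 y hy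
    · intro k
      have hsf : (s.filter fun y => Function.update φ x j y = k)
          = s.filter fun y => φ y = k := by
        apply filter_congr
        intro y hy
        have hne : y ≠ x := fun h => hx (h ▸ hy)
        simp [Function.update_of_ne hne]
      have hcard : ((insert x s).card : ℝ) = (s.card : ℝ) + 1 := by
        rw [card_insert_of_notMem hx]; push_cast; ring
      have hgoalB : ⌈(2 * ((insert x s).card : ℝ)) / (a * r)⌉₊ = B := by
        rw [hcard]
      rw [hgoalB]
      have hBB : ⌈(2 * (s.card : ℝ)) / (a * r)⌉₊ ≤ B := by
        apply Nat.ceil_le_ceil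
        gcongr
        linarith
      rw [filter_insert]
      by_cases hk : j = k
      · subst hk
        rw [if_pos (by simp : Function.update φ x j x = j)]
        rw [card_insert_of_notMem (fun h => hx (mem_of_mem_filter x h)), hsf]
        omega
      · rw [if_neg (by simp [Function.update_self, hk]), hsf]
        exact le_trans (hφ2 k) hBB

theorem stmt_8 {V : Type*} [DecidableEq V] (X : Finset V) (r : ℕ) (a : ℝ)
    (ha : 0 < a) (ha2 : a ≤ 2) (hr : 1 ≤ r)
    (A : V → Finset (Fin r))
    (hA : ∀ x ∈ X, (a / 2) * r ≤ ((A x).card : ℝ)) :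
    ∃ φ : V → Fin r, (∀ x ∈ X, φ x ∈ A x) ∧
      ∀ j, (X.filter fun x => φ x = j).card ≤ ⌈(2 * X.card : ℝ) / (a * r)⌉₊ := by
  exact aux_assign r a ha hr A X hA
end

section
/- Let k ≥ 1, n ≥ k+1 with (k+1) ∣ n. The complete (k+1)-partite graph with all parts of size n/(k+1) has minimum degree exactly kn/(k+1) and contains the k-th power of a Hamilton cycle, but contains no copy of K_{k+2}; in particular it does not contain the (k+1)-st power of a Hamilton cycle when n ≥ k+2. -/
/-- The complete `(k+1)`-partite graph with parts given by the fibres of `p`. -/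
def completeMultipartiteOn {α : Type*} {k : ℕ} (p : α → Fin (k + 1)) : SimpleGraph α where
  Adj x y := p x ≠ p y
  symm := ⟨fun _ _ h e => h e.symm⟩
  loopless := ⟨fun _ h => h rfl⟩

instance {α : Type*} {k : ℕ} (p : α → Fin (k + 1)) :
    DecidableRel (completeMultipartiteOn p).Adj :=
  fun x y => inferInstanceAs (Decidable (p x ≠ p y))

theorem stmt_14 {α : Type*} [Fintype α] [DecidableEq α] (k n : ℕ)
    (hk : 1 ≤ k) (hn : k + 1 ≤ n) (hdvd : (k + 1) ∣ n) (hcard : Fintype.card α = n)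
    (p : α → Fin (k + 1))
    (hfib : ∀ j, (Finset.univ.filter fun x => p x = j).card = n / (k + 1)) :
    (completeMultipartiteOn p).minDegree = k * (n / (k + 1)) ∧
    (∃ f : ZMod n → α, Function.Bijective f ∧
      ∀ (i : ZMod n) (d : ℕ), 1 ≤ d → d ≤ k →
        (completeMultipartiteOn p).Adj (f i) (f (i + (d : ZMod n)))) ∧
    (¬ ∃ S : Finset α, S.card = k + 2 ∧ (completeMultipartiteOn p).IsClique (S : Set α)) ∧
    (k + 2 ≤ n → ¬ ∃ f : ZMod n → α, Function.Bijective f ∧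
      ∀ (i : ZMod n) (d : ℕ), 1 ≤ d → d ≤ k + 1 →
        (completeMultipartiteOn p).Adj (f i) (f (i + (d : ZMod n)))) := by
  classical
  have hm : (k + 1) * (n / (k + 1)) = n := Nat.mul_div_cancel' hdvd
  set m := n / (k + 1) with hmdef
  haveI : NeZero n := ⟨by omega⟩
  haveI : Nonempty α := Fintype.card_pos_iff.mp (by omega)
  have hmpos : 0 < m := by nlinarith
  -- no K_{k+2}
  have noclique : ¬ ∃ S : Finset α, S.card = k + 2 ∧
      (completeMultipartiteOn p).IsClique (S : Set α) := by
    rintro ⟨S, hS, hclique⟩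
    have hinj : Set.InjOn p (S : Set α) := by
      intro x hx y hy hpxy
      by_contra hne
      exact (hclique hx hy hne) hpxy
    have hle : S.card ≤ (Finset.univ : Finset (Fin (k + 1))).card :=
      Finset.card_le_card_of_injOn p (fun x _ => Finset.mem_univ (p x)) hinj
    simp [hS] at hle
  -- degrees
  have hdeg : ∀ v : α, (completeMultipartiteOn p).degree v = k * m := by
    intro v
    have h1 : (completeMultipartiteOn p).degree v
        = (Finset.univ.filter fun x => ¬ p x = p v).card := by
      rw [SimpleGraph.degree]
      congr 1
      ext x
      simp only [SimpleGraph.mem_neighborFinset, Finset.mem_filter, Finset.mem_univ, true_and]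
      constructor
      · exact fun h => fun e => h (e.symm)
      · exact fun h => fun e => h (e.symm)
    have h2 := Finset.card_filter_add_card_filter_not
      (s := (Finset.univ : Finset α)) (p := fun x => p x = p v)
    rw [hfib (p v)] at h2
    rw [Finset.card_univ, hcard] at h2
    have hkm : k * m + m = (k + 1) * m := by ring
    rw [h1]
    omega
  refine ⟨?_, ?_, noclique, ?_⟩
  · apply le_antisymm
    · calc (completeMultipartiteOn p).minDegree
          ≤ (completeMultipartiteOn p).degree (Classical.arbitrary α) :=
            SimpleGraph.minDegree_le_degree _ _
        _ = k * m := hdeg _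
    · exact SimpleGraph.le_minDegree_of_forall_le_degree _ _ (fun v => (hdeg v).ge)
  -- power of Hamilton cycle
  · set q : ZMod n → Fin (k + 1) := fun i => ⟨i.val % (k + 1), Nat.mod_lt _ (Nat.succ_pos k)⟩
      with hq
    have hqval : ∀ i : ZMod n, (q i : ℕ) = i.val % (k + 1) := fun i => rfl
    have hqfib : ∀ j : Fin (k + 1), Fintype.card {i : ZMod n // q i = j} = m := by
      intro j
      have : {i : ZMod n // q i = j} ≃ Fin m := by
        refine ⟨fun x => ⟨x.1.val / (k + 1), ?_⟩,
          fun r => ⟨(((j : ℕ) + (k + 1) * (r : ℕ) : ℕ) : ZMod n), ?_⟩, ?_, ?_⟩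
        · apply Nat.div_lt_of_lt_mul
          have := ZMod.val_lt x.1
          omega
        · have hlt : (j : ℕ) + (k + 1) * (r : ℕ) < n := by
            have h1 : (j : ℕ) < k + 1 := j.isLt
            have h2 : (r : ℕ) < m := r.isLt
            nlinarith
          apply Fin.ext
          rw [hqval, ZMod.val_cast_of_lt hlt, Nat.add_mul_mod_self_left,
            Nat.mod_eq_of_lt j.isLt]
        · rintro ⟨i, hi⟩
          apply Subtype.ext
          have hj : (j : ℕ) = i.val % (k + 1) := by rw [← hi]
          apply ZMod.val_injective
          have hlt : (j : ℕ) + (k + 1) * (i.val / (k + 1)) < n := by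
            rw [hj, Nat.mod_add_div]
            exact ZMod.val_lt i
          rw [ZMod.val_cast_of_lt hlt, hj, Nat.mod_add_div]
        · intro r
          apply Fin.ext
          have hlt : (j : ℕ) + (k + 1) * (r : ℕ) < n := by
            have h1 : (j : ℕ) < k + 1 := j.isLt
            have h2 : (r : ℕ) < m := r.isLt
            nlinarith
          show ((((j : ℕ) + (k + 1) * (r : ℕ) : ℕ) : ZMod n)).val / (k + 1) = (r : ℕ)
          rw [ZMod.val_cast_of_lt hlt, Nat.add_mul_div_left _ _ (Nat.succ_pos k),
            Nat.div_eq_of_lt j.isLt, Nat.zero_add]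
      rw [Fintype.card_congr this, Fintype.card_fin]
    have e : ∀ j : Fin (k + 1), {i : ZMod n // q i = j} ≃ {x : α // p x = j} := by
      intro j
      apply Fintype.equivOfCardEq
      rw [hqfib j, Fintype.card_subtype, hfib j]
    set F : ZMod n ≃ α := Equiv.ofFiberEquiv e with hF
    have hpF : ∀ i, p (F i) = q i := fun i => Equiv.ofFiberEquiv_map e i
    refine ⟨F, F.bijective, ?_⟩
    intro i d hd1 hd2
    show p (F i) ≠ p (F (i + (d : ZMod n)))
    rw [hpF, hpF]
    intro hcon
    have hval := congrArg Fin.val hcon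
    rw [hqval, hqval] at hval
    have hdval : ((d : ZMod n)).val = d := ZMod.val_cast_of_lt (by omega)
    rw [ZMod.val_add, hdval, Nat.mod_mod_of_dvd _ hdvd] at hval
    have : i.val ≡ i.val + d [MOD (k + 1)] := by
      unfold Nat.ModEq
      omega
    have hdvd2 : (k + 1) ∣ d := by
      have := (Nat.modEq_iff_dvd' (Nat.le_add_right _ _)).mp this
      simpa using this
    have := Nat.le_of_dvd (by omega) hdvd2
    omega
  -- no (k+1)-st power
  · intro hn2
    rintro ⟨f, hfbij, hadj⟩
    apply noclique
    refine ⟨(Finset.range (k + 2)).image (fun d : ℕ => f ((d : ℕ) : ZMod n)), ?_, ?_⟩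
    · rw [Finset.card_image_of_injOn, Finset.card_range]
      intro a ha b hb hab
      simp only [Finset.coe_range, Set.mem_Iio] at ha hb
      have : (a : ZMod n) = (b : ZMod n) := hfbij.1 hab
      have := (ZMod.natCast_eq_natCast_iff' a b n).mp this
      rw [Nat.mod_eq_of_lt (by omega), Nat.mod_eq_of_lt (by omega)] at this
      exact this
    · intro x hx y hy hxy
      simp only [Finset.coe_image, Finset.coe_range, Set.mem_image, Set.mem_Iio] at hx hy
      obtain ⟨a, ha, rfl⟩ := hx
      obtain ⟨b, hb, rfl⟩ := hy
      have hab : a ≠ b := fun h => hxy (by rw [h])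
      rcases Nat.lt_or_ge a b with h | h
      · have := hadj (a : ZMod n) (b - a) (by omega) (by omega)
        have hcast : ((a : ℕ) : ZMod n) + ((b - a : ℕ) : ZMod n) = ((b : ℕ) : ZMod n) := by
          rw [← Nat.cast_add]
          congr 1
          omega
        rwa [hcast] at this
      · have hba : b < a := by omega
        have := hadj (b : ZMod n) (a - b) (by omega) (by omega)
        have hcast : ((b : ℕ) : ZMod n) + ((a - b : ℕ) : ZMod n) = ((a : ℕ) : ZMod n) := by
          rw [← Nat.cast_add]
          congr 1
          omega
        rw [hcast] at this
        exact this.symm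
end
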